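/- Let k ≥ 1. The power functions satisfy the following Poisson bracket relations identically on ℝ^{2(k+2)}: {P_1, P_i} = P_{i+1} for 2 ≤ i ≤ k+1, {P_1, P_{k+2}} = 0, and {P_i, P_j} = 0 for all 2 ≤ i < j ≤ k+2. -/

import Mathlib

/-- The power functions `P_1, …, P_{k+2}` (0-indexed: `powerFn k a` is `P_{a+1}`) on the
phase space `T^* J^k ≅ ℝ^{k+2} × ℝ^{k+2}`.  Configuration coordinates are indexed so that
`q 0 = x`, `q i = u_{k+1-i}` for `1 ≤ i ≤ k`, `q (k+1) = y`, and `p i` is the momentum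
conjugate to `q i` (so `p 0 = p_x`, `p 1 = p_k`, …, `p k = p_1`, `p (k+1) = p_y`).
Then `P_1 = p_x + u_1 p_y + ∑_{i=2}^k u_i p_{i-1} = p 0 + ∑_{j=1}^{k} q j * p (j+1)`,
and `P_m = p (m-1)` for `2 ≤ m ≤ k+2`. -/
noncomputable def powerFn (k : ℕ) (a : Fin (k + 2))
    (z : (Fin (k + 2) → ℝ) × (Fin (k + 2) → ℝ)) : ℝ :=
  if a = ⟨0, by omega⟩ then
    z.2 ⟨0, by omega⟩ + ∑ j : Fin k, z.1 ⟨j.1 + 1, by omega⟩ * z.2 ⟨j.1 + 2, by omega⟩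
  else z.2 a

/-- The canonical Poisson bracket `{f,g} = ∑_q (∂f/∂q ∂g/∂p_q − ∂f/∂p_q ∂g/∂q)` on
`ℝ^{2(k+2)} = (Fin (k+2) → ℝ) × (Fin (k+2) → ℝ)` (first factor: configuration coordinates,
second factor: conjugate momenta). -/
noncomputable def poissonBracket (k : ℕ)
    (f g : ((Fin (k + 2) → ℝ) × (Fin (k + 2) → ℝ)) → ℝ)
    (z : (Fin (k + 2) → ℝ) × (Fin (k + 2) → ℝ)) : ℝ :=
  ∑ i : Fin (k + 2),
    (fderiv ℝ f z ((Pi.single i 1 : Fin (k + 2) → ℝ), (0 : Fin (k + 2) → ℝ)) *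
        fderiv ℝ g z ((0 : Fin (k + 2) → ℝ), (Pi.single i 1 : Fin (k + 2) → ℝ)) -
      fderiv ℝ f z ((0 : Fin (k + 2) → ℝ), (Pi.single i 1 : Fin (k + 2) → ℝ)) *
        fderiv ℝ g z ((Pi.single i 1 : Fin (k + 2) → ℝ), (0 : Fin (k + 2) → ℝ)))

/-!
Bracketing with a momentum coordinate differentiates along the conjugate position:
`{f, p_b} = ∂f/∂q_b`. Hence the momenta `P_2, …, P_{k+2}` Poisson-commute, and `{P_1, p_b}` is
the coefficient of `q_b` in `P_1`, namely `p_{b+1}` for `1 ≤ b ≤ k` and `0` for `q_{k+1} = y`.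
-/

namespace PowerFn

variable {k : ℕ}

noncomputable def momentum (a : Fin (k + 2)) :
    ((Fin (k + 2) → ℝ) × (Fin (k + 2) → ℝ)) →L[ℝ] ℝ :=
  (ContinuousLinearMap.proj a).comp (ContinuousLinearMap.snd ℝ _ _)

noncomputable def position (a : Fin (k + 2)) :
    ((Fin (k + 2) → ℝ) × (Fin (k + 2) → ℝ)) →L[ℝ] ℝ :=
  (ContinuousLinearMap.proj a).comp (ContinuousLinearMap.fst ℝ _ _)

@[simp] lemma momentum_apply (a : Fin (k + 2)) (v : (Fin (k + 2) → ℝ) × (Fin (k + 2) → ℝ)) :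
    momentum a v = v.2 a := rfl

@[simp] lemma position_apply (a : Fin (k + 2)) (v : (Fin (k + 2) → ℝ) × (Fin (k + 2) → ℝ)) :
    position a v = v.1 a := rfl

theorem poissonBracket_momentum_right (f : ((Fin (k + 2) → ℝ) × (Fin (k + 2) → ℝ)) → ℝ)
    (b : Fin (k + 2)) (z : (Fin (k + 2) → ℝ) × (Fin (k + 2) → ℝ)) :
    poissonBracket k f (momentum b) z = fderiv ℝ f z (Pi.single b 1, 0) := by
  simp [poissonBracket, ContinuousLinearMap.fderiv, Pi.single_apply]

lemma powerFn_mk_of_pos {a : ℕ} (ha : 0 < a) (hak : a < k + 2) :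
    powerFn k ⟨a, hak⟩ = momentum ⟨a, hak⟩ := by
  funext z
  simp [powerFn, ha.ne']

lemma hasFDerivAt_powerFn_zero (z : (Fin (k + 2) → ℝ) × (Fin (k + 2) → ℝ)) :
    HasFDerivAt (powerFn k ⟨0, Nat.zero_lt_succ _⟩)
      (momentum ⟨0, Nat.zero_lt_succ _⟩ + ∑ j : Fin k,
        (z.1 ⟨j + 1, by omega⟩ • momentum ⟨j + 2, by omega⟩ +
          z.2 ⟨j + 2, by omega⟩ • position ⟨j + 1, by omega⟩)) z := by
  have hP₁ : powerFn k ⟨0, Nat.zero_lt_succ _⟩ = fun w => momentum ⟨0, Nat.zero_lt_succ _⟩ w +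
      ∑ j : Fin k, position ⟨j + 1, by omega⟩ w * momentum ⟨j + 2, by omega⟩ w := by
    funext w
    simp [powerFn]
  rw [hP₁]
  exact (momentum _).hasFDerivAt.add
    (HasFDerivAt.fun_sum fun j _ => (position _).hasFDerivAt.mul (momentum _).hasFDerivAt)

lemma fderiv_powerFn_zero_position (b : Fin (k + 2))
    (z : (Fin (k + 2) → ℝ) × (Fin (k + 2) → ℝ)) :
    fderiv ℝ (powerFn k ⟨0, Nat.zero_lt_succ _⟩) z (Pi.single b 1, 0) =
      ∑ j : Fin k, if (j : ℕ) + 1 = b then z.2 ⟨j + 2, by omega⟩ else 0 := by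
  rw [(hasFDerivAt_powerFn_zero z).fderiv]
  simp [Pi.single_apply, Fin.ext_iff]

theorem poissonBracket_powerFn_zero_momentum {b : ℕ} (hb₁ : 1 ≤ b) (hbk : b ≤ k)
    (z : (Fin (k + 2) → ℝ) × (Fin (k + 2) → ℝ)) :
    poissonBracket k (powerFn k ⟨0, Nat.zero_lt_succ _⟩) (momentum ⟨b, by omega⟩) z =
      z.2 ⟨b + 1, by omega⟩ := by
  rw [poissonBracket_momentum_right, fderiv_powerFn_zero_position,
    Finset.sum_eq_single_of_mem (⟨b - 1, by omega⟩ : Fin k) (Finset.mem_univ _)]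
  · rw [if_pos (by simp only; omega)]
    exact congrArg z.2 (Fin.ext (by simp only; omega))
  · intro j _ hj
    rw [if_neg]
    exact fun h => hj (Fin.ext (by simp only at h ⊢; omega))

theorem poissonBracket_powerFn_zero_momentum_last
    (z : (Fin (k + 2) → ℝ) × (Fin (k + 2) → ℝ)) :
    poissonBracket k (powerFn k ⟨0, Nat.zero_lt_succ _⟩)
      (momentum ⟨k + 1, (k + 1).lt_succ_self⟩) z = 0 := by
  rw [poissonBracket_momentum_right, fderiv_powerFn_zero_position]
  exact Finset.sum_eq_zero fun j _ => if_neg (by have := j.isLt; simp only; omega)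

theorem poissonBracket_momentum_momentum (a b : Fin (k + 2))
    (z : (Fin (k + 2) → ℝ) × (Fin (k + 2) → ℝ)) :
    poissonBracket k (momentum a) (momentum b) z = 0 := by
  rw [poissonBracket_momentum_right, ContinuousLinearMap.fderiv]
  rfl

end PowerFn

/-- the Poisson bracket relations among the power functions:
`{P_1, P_i} = P_{i+1}` for `2 ≤ i ≤ k+1`, `{P_1, P_{k+2}} = 0`, and `{P_i, P_j} = 0`
for `2 ≤ i < j ≤ k+2`, identically on `ℝ^{2(k+2)}`. -/
theorem stmt_1 (k : ℕ) (z : (Fin (k + 2) → ℝ) × (Fin (k + 2) → ℝ)) :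
    (∀ (i : ℕ) (_h2 : 2 ≤ i) (_hik : i ≤ k + 1),
      poissonBracket k (powerFn k ⟨0, by omega⟩) (powerFn k ⟨i - 1, by omega⟩) z
        = powerFn k ⟨i, by omega⟩ z) ∧
    poissonBracket k (powerFn k ⟨0, by omega⟩) (powerFn k ⟨k + 1, by omega⟩) z = 0 ∧
    (∀ (i j : ℕ) (_h2 : 2 ≤ i) (_hij : i < j) (_hjk : j ≤ k + 2),
      poissonBracket k (powerFn k ⟨i - 1, by omega⟩) (powerFn k ⟨j - 1, by omega⟩) z = 0) := by
  refine ⟨fun i h2 hik => ?_, ?_, fun i j h2 hij hjk => ?_⟩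
  · rw [PowerFn.powerFn_mk_of_pos (a := i - 1) (by omega),
      PowerFn.powerFn_mk_of_pos (a := i) (by omega),
      PowerFn.poissonBracket_powerFn_zero_momentum (by omega) (by omega)]
    simp only [PowerFn.momentum_apply, Nat.sub_add_cancel (by omega : 1 ≤ i)]
  · rw [PowerFn.powerFn_mk_of_pos (a := k + 1) (by omega),
      PowerFn.poissonBracket_powerFn_zero_momentum_last]
  · rw [PowerFn.powerFn_mk_of_pos (a := i - 1) (by omega),
      PowerFn.powerFn_mk_of_pos (a := j - 1) (by omega),
      PowerFn.poissonBracket_momentum_momentum]
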